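/- arXiv:2205.04744 — 2 statements merged into one kernel-verified Lean document; each statement's English description precedes it below -/
import Mathlib

section
/- Let (X, d) be a metric space, j a point, F a finite set of points with weights y : F → [0,1] such that Σ_{i∈F} y_i = r for an integer r ≥ 1, and let dmax(j) be the smallest radius R such that y(Ball(j,R)) ≥ r (i.e., the weight of facilities within distance R of j is at least r). Fix γ > 3 and let B_j = {i ∈ F : d(i,j) ≤ dmax(j)/γ}. If j is 'dangerous', meaning dmax(j) > 3γ · dav_r(j), where dav_r(j) is the y-weighted average distance of the farthest unit-weight slice F_{j,r}, then y(B_j) ≥ r − 1/3. -/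
/-- If client `j` is dangerous, i.e. `dmax(j) > 3γ·dav_r(j)`, then the ball
`B_j = Ball(j, dmax(j)/γ)` carries `y`-weight at least `r − 1/3`. -/
theorem stmt_1 {X : Type*} [MetricSpace X] [DecidableEq X] (j : X) (F Fr : Finset X)
    (hFr : Fr ⊆ F) (r : ℕ) (hr : 1 ≤ r)
    (y : X → ℝ) (hy0 : ∀ i ∈ F, 0 ≤ y i) (hy1 : ∀ i ∈ F, y i ≤ 1)
    (hyF : ∑ i ∈ F, y i = (r : ℝ)) (hyFr : ∑ i ∈ Fr, y i = 1)
    -- `Fr` is the farthest unit-weight slice of `F`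
    (hfar : ∀ i ∈ F \ Fr, ∀ i' ∈ Fr, dist i j ≤ dist i' j)
    (davr : ℝ) (hdavr : davr = ∑ i ∈ Fr, y i * dist i j)
    (dmax : ℝ)
    -- `dmax` is the smallest radius `R` with `y(Ball(j,R)) ≥ r`
    (hdmax₁ : (r : ℝ) ≤ ∑ i ∈ F.filter (fun i => dist i j ≤ dmax), y i)
    (hdmax₂ : ∀ R : ℝ, R < dmax → ∑ i ∈ F.filter (fun i => dist i j ≤ R), y i < (r : ℝ))
    (γ : ℝ) (hγ : 3 < γ)
    (hdanger : dmax > 3 * γ * davr) :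
    (r : ℝ) - 1 / 3 ≤ ∑ i ∈ F.filter (fun i => dist i j ≤ dmax / γ), y i := by
  by_contra h
  push_neg at h
  have hdavr0 : 0 ≤ davr := by
    rw [hdavr]
    exact Finset.sum_nonneg fun i hi => mul_nonneg (hy0 i (hFr hi)) dist_nonneg
  have hγ0 : (0:ℝ) < γ := by linarith
  have hdmax0 : 0 < dmax := by nlinarith
  by_cases hA : ∀ i ∈ Fr, dmax / γ < dist i j
  · -- all of Fr is far: davr ≥ dmax/γ, contradiction with danger
    have h1 : dmax / γ ≤ davr := by
      rw [hdavr]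
      calc dmax / γ = ∑ i ∈ Fr, y i * (dmax / γ) := by
            rw [← Finset.sum_mul, hyFr, one_mul]
        _ ≤ ∑ i ∈ Fr, y i * dist i j :=
            Finset.sum_le_sum fun i hi =>
              mul_le_mul_of_nonneg_left (le_of_lt (hA i hi)) (hy0 i (hFr hi))
    have h2 : dmax ≤ γ * davr := by
      rw [div_le_iff₀ hγ0] at h1
      linarith
    nlinarith
  · push_neg at hA
    obtain ⟨i0, hi0, hi0d⟩ := hA
    set T := F.filter (fun i => ¬ dist i j ≤ dmax / γ) with hT
    have hTFr : T ⊆ Fr := by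
      intro i hi
      rw [hT, Finset.mem_filter] at hi
      by_contra hiFr
      exact hi.2 (le_trans (hfar i (Finset.mem_sdiff.mpr ⟨hi.1, hiFr⟩) i0 hi0) hi0d)
    have hsplit : ∑ i ∈ F.filter (fun i => dist i j ≤ dmax / γ), y i
        + ∑ i ∈ T, y i = (r : ℝ) := by
      rw [hT, Finset.sum_filter_add_sum_filter_not, hyF]
    have hyT : 1 / 3 < ∑ i ∈ T, y i := by linarith
    have h3 : (∑ i ∈ T, y i) * (dmax / γ) ≤ davr := by
      rw [hdavr, Finset.sum_mul]
      calc ∑ i ∈ T, y i * (dmax / γ) ≤ ∑ i ∈ T, y i * dist i j := by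
            refine Finset.sum_le_sum fun i hi => ?_
            rw [hT, Finset.mem_filter] at hi
            exact mul_le_mul_of_nonneg_left (le_of_lt (not_le.mp hi.2)) (hy0 i hi.1)
        _ ≤ ∑ i ∈ Fr, y i * dist i j :=
            Finset.sum_le_sum_of_subset_of_nonneg hTFr fun i hi _ =>
              mul_nonneg (hy0 i (hFr hi)) dist_nonneg
    have h4 : (1 / 3 : ℝ) * (dmax / γ) < davr :=
      lt_of_lt_of_le (mul_lt_mul_of_pos_right hyT (by positivity)) h3
    have h6 : dmax / γ < 3 * davr := by linarith
    rw [div_lt_iff₀ hγ0] at h6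
    nlinarith
end

section
/- Let j be a client, OPT ≥ 0, and δ_j the distance from j to its r-th nearest open facility in a feasible solution of total cost at most OPT. Then Σ_{j'∈C} max(0, δ_j − d(j,j')) ≤ OPT, where C is the set of all clients, assuming each client j' pays at least the distance to its own r-th nearest open facility toward the total cost. -/
/-- Kumar's inequality (Equation (3)): if `ρ p` is the distance from `p` to its
`r`-th nearest open facility and each client pays at least `ρ`, with total
service cost at most `OPT`, then `Σ_{j'∈C} max(0, ρ j − d(j,j')) ≤ OPT`. -/
theorem stmt_13 {X : Type*} [MetricSpace X] [DecidableEq X]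
    (C Fstar : Finset X) (r : ℕ) (hr : 1 ≤ r) (hrF : r ≤ Fstar.card)
    (ρ : X → ℝ)
    (hρ : ∀ p : X, (Fstar.filter (fun i => dist i p < ρ p)).card < r ∧
      r ≤ (Fstar.filter (fun i => dist i p ≤ ρ p)).card)
    (cost : X → ℝ) (hcost : ∀ j' ∈ C, ρ j' ≤ cost j')
    (hcost0 : ∀ j' ∈ C, 0 ≤ cost j')
    (OPT : ℝ) (hOPT : 0 ≤ OPT)
    (htotal : ∑ j' ∈ C, cost j' ≤ OPT)
    (j : X) (hj : j ∈ C) :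
    ∑ j' ∈ C, max 0 (ρ j - dist j j') ≤ OPT := by
  refine le_trans (Finset.sum_le_sum ?_) htotal
  intro j' hj'
  refine max_le (hcost0 j' hj') (le_trans ?_ (hcost j' hj'))
  by_contra h
  push_neg at h
  have hsub : Fstar.filter (fun i => dist i j' ≤ ρ j') ⊆
      Fstar.filter (fun i => dist i j < ρ j) := by
    intro i hi
    simp only [Finset.mem_filter] at hi ⊢
    refine ⟨hi.1, ?_⟩
    calc dist i j ≤ dist i j' + dist j' j := dist_triangle _ _ _
      _ = dist i j' + dist j j' := by rw [dist_comm j' j]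
      _ ≤ ρ j' + dist j j' := by linarith [hi.2]
      _ < ρ j := by linarith
  have := lt_of_le_of_lt (le_trans (hρ j').2 (Finset.card_le_card hsub)) (hρ j).1
  exact lt_irrefl _ this
end
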